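/- For real x with 0 < |x| < 1, D(x)/D(-x) = e^x · S₂(x/2)⁴ / S₂(x), where D is the Borwein–Dykshoorn function and S₂ is the Kurokawa double sine function. -/

import Mathlib

open Filter Real Topology Finset

noncomputable def catalanG : ℝ := ∑' n : ℕ, (-1 : ℝ) ^ n / (2 * n + 1) ^ 2

noncomputable def zeta3 : ℝ := ∑' n : ℕ, (1 : ℝ) / (n + 1) ^ 3

/-- Kurokawa double sine (Hölder's function). -/
noncomputable def S2 (z : ℝ) : ℝ :=
  Real.exp z * ∏' n : ℕ, (((1 - z / (n + 1)) / (1 + z / (n + 1))) ^ (n + 1) * Real.exp (2 * z))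

/-- Kurokawa triple sine. -/
noncomputable def S3 (x : ℝ) : ℝ :=
  Real.exp (x ^ 2 / 2) * ∏' n : ℕ, (Real.exp (x ^ 2) * (1 - x ^ 2 / (n + 1) ^ 2) ^ ((n + 1) ^ 2))

/-- Kurokawa triple cosine. -/
noncomputable def C3 (x : ℝ) : ℝ :=
  ∏' n : ℕ, (Real.exp (x ^ 2) * (1 - 4 * x ^ 2 / (2 * n + 1) ^ 2) ^ (((2 * (n : ℝ) + 1) ^ 2) / 4))

/-- Partial Borwein–Dykshoorn product up to `2 n + 1`. -/
noncomputable def Dn (x : ℝ) (n : ℕ) : ℝ :=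
  ∏ k ∈ Finset.Icc 1 (2 * n + 1), (1 + x / k) ^ ((k : ℤ) * (-1) ^ (k + 1))

/-- Partial Adamchik product up to `2 N`. -/
noncomputable def En (x : ℝ) (N : ℕ) : ℝ :=
  ∏ k ∈ Finset.Icc 1 (2 * N), (Real.exp (4 * x ^ 2) * (1 - 4 * x ^ 2 / k ^ 2) ^ (k ^ 2)) ^ ((-1 : ℤ) ^ (k + 1))

/-! Write `g_m(z)` for the `m`-th factor of the product defining `S2 z`. Comparing factors pairwise
gives the finite identity `D_n(x) ∏_{m ≤ 2n} g_m(x) = D_n(-x) e^{2x} (∏_{m < n} g_m(x/2))^4`, and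
letting `n → ∞` yields `D(x) e^{-x} S₂(x) = D(-x) e^{2x} (e^{-x/2} S₂(x/2))^4`. The products of the
`g_m` converge to positive limits since `log g_m(z) = O(1/m²)`, and `D(-x) ≥ 1 - x > 0` since
`(1 + y/k)^k` increases with `k`, which makes every pair of consecutive factors of `D_n(y)` at
least `1`. -/

lemma one_add_div_pos {z k : ℝ} (hk : 0 < k) (hz : -k < z) : 0 < 1 + z / k := by
  have : -1 < z / k := by rw [lt_div_iff₀ hk]; linarith
  linarith

lemma abs_mul_log_one_add_div_sub_le {z k : ℝ} (hz : |z| < 1) (hk : 1 ≤ k) :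
    |k * log (1 + z / k) - z + z ^ 2 / (2 * k)| ≤ 1 / ((1 - |z|) * k ^ 2) := by
  have hk0 : 0 < k := by linarith
  have ht : |z / k| ≤ |z| := by
    rw [abs_div, abs_of_pos hk0]
    exact div_le_self (abs_nonneg z) hk
  have hlog : |log (1 + z / k) - z / k + (z / k) ^ 2 / 2| ≤ |z / k| ^ 3 / (1 - |z / k|) := by
    have key := abs_log_sub_add_sum_range_le (x := -(z / k)) (by rw [abs_neg]; linarith) 2
    simp only [sum_range_succ, sum_range_zero, sub_neg_eq_add, abs_neg] at key
    convert key using 2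
    push_cast
    ring
  have hz3 : |z| ^ 3 ≤ 1 := pow_le_one₀ (abs_nonneg z) hz.le
  calc |k * log (1 + z / k) - z + z ^ 2 / (2 * k)|
      = k * |log (1 + z / k) - z / k + (z / k) ^ 2 / 2| := by
        rw [← abs_of_pos hk0, ← abs_mul, abs_of_pos hk0]
        congr 1
        field_simp
    _ ≤ k * (|z / k| ^ 3 / (1 - |z|)) := by
        gcongr
        exact hlog.trans (by gcongr)
    _ = |z| ^ 3 / ((1 - |z|) * k ^ 2) := by
        rw [abs_div, abs_of_pos hk0]
        field_simp
    _ ≤ 1 / ((1 - |z|) * k ^ 2) := by gcongr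

noncomputable def S2Factor (z : ℝ) (n : ℕ) : ℝ :=
  ((1 - z / (n + 1)) / (1 + z / (n + 1))) ^ (n + 1) * exp (2 * z)

lemma S2_eq_exp_mul_tprod (z : ℝ) : S2 z = exp z * ∏' n, S2Factor z n := rfl

section S2Factor

variable {z : ℝ}

lemma S2Factor_pos (hz : |z| < 1) (n : ℕ) : 0 < S2Factor z n := by
  have hn : (0 : ℝ) < n + 1 := by positivity
  have hp := one_add_div_pos hn (by linarith [(abs_lt.1 hz).1] : -((n : ℝ) + 1) < z)
  have hq : 0 < 1 - z / (n + 1) := by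
    simpa [sub_eq_add_neg, neg_div] using
      one_add_div_pos hn (by linarith [(abs_lt.1 hz).2] : -((n : ℝ) + 1) < -z)
  unfold S2Factor
  positivity

lemma abs_log_S2Factor_le (hz : |z| < 1) (n : ℕ) :
    |log (S2Factor z n)| ≤ 2 / ((1 - |z|) * (n + 1) ^ 2) := by
  have hn : (1 : ℝ) ≤ n + 1 := by linarith [n.cast_nonneg (α := ℝ)]
  have hp := one_add_div_pos (by positivity) (by linarith [(abs_lt.1 hz).1] : -((n : ℝ) + 1) < z)
  have hq :=
    one_add_div_pos (by positivity) (by linarith [(abs_lt.1 hz).2] : -((n : ℝ) + 1) < -z)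
  have hplus := abs_mul_log_one_add_div_sub_le hz hn
  have hminus := abs_mul_log_one_add_div_sub_le (z := -z) (by rwa [abs_neg]) hn
  rw [abs_neg] at hminus
  have hlog : log (S2Factor z n) =
      ((n + 1) * log (1 + -z / (n + 1)) - -z + (-z) ^ 2 / (2 * (n + 1)))
        - ((n + 1) * log (1 + z / (n + 1)) - z + z ^ 2 / (2 * (n + 1))) := by
    have hsub : 1 - z / (n + 1) = 1 + -z / (n + 1) := by ring
    rw [S2Factor, hsub, log_mul (by positivity) (exp_pos _).ne', log_exp, log_pow,
      log_div hq.ne' hp.ne']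
    push_cast
    ring
  rw [hlog]
  calc _ ≤ _ := abs_sub _ _
    _ ≤ _ := add_le_add hminus hplus
    _ = _ := by ring

lemma summable_log_S2Factor (hz : |z| < 1) : Summable fun n ↦ log (S2Factor z n) := by
  refine .of_norm_bounded (g := fun n : ℕ ↦ 2 / (1 - |z|) * (1 / ((n : ℝ) + 1) ^ 2)) ?_ ?_
  · have := (summable_nat_add_iff 1).2 (summable_one_div_nat_pow.2 one_lt_two)
    exact (this.mul_left (2 / (1 - |z|))).congr fun n ↦ by push_cast; ring
  · intro n
    rw [Real.norm_eq_abs]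
    exact (abs_log_S2Factor_le hz n).trans_eq (by field_simp)

lemma hasProd_S2Factor (hz : |z| < 1) : HasProd (S2Factor z) (∏' n, S2Factor z n) :=
  (Real.multipliable_of_summable_log (S2Factor_pos hz) (summable_log_S2Factor hz)).hasProd

lemma tprod_S2Factor_pos (hz : |z| < 1) : 0 < ∏' n, S2Factor z n := by
  rw [← Real.rexp_tsum_eq_tprod (S2Factor_pos hz) (summable_log_S2Factor hz)]
  exact exp_pos _

end S2Factor

lemma one_add_div_pow_le_one_add_div_succ_pow {k : ℕ} (hk : 0 < k) {y : ℝ} (hy : -k < y) :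
    (1 + y / k) ^ k ≤ (1 + y / (k + 1)) ^ (k + 1) := by
  have hk0 : (0 : ℝ) < k := by exact_mod_cast hk
  have ha : 0 < 1 + y / k := one_add_div_pos hk0 hy
  have hb : 0 < 1 + y / (k + 1) := one_add_div_pos (by positivity) (by linarith)
  have hky : (k : ℝ) + y ≠ 0 := by linarith
  have bernoulli := one_add_mul_le_pow (a := (1 + y / (k + 1)) / (1 + y / k) - 1)
    (by linarith [div_pos hb ha]) (k + 1)
  have hkey :
      1 + ((k + 1 : ℕ) : ℝ) * ((1 + y / (k + 1)) / (1 + y / k) - 1) = 1 / (1 + y / k) := by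
    push_cast
    field_simp
    ring
  rw [hkey, add_sub_cancel, div_pow, le_div_iff₀ (pow_pos ha _)] at bernoulli
  calc (1 + y / k) ^ k = 1 / (1 + y / k) * (1 + y / k) ^ (k + 1) := by
        rw [pow_succ]
        field_simp
    _ ≤ _ := bernoulli

noncomputable def DnStep (y : ℝ) (n : ℕ) : ℝ :=
  (1 + y / (2 * n + 3)) ^ (2 * n + 3) / (1 + y / (2 * n + 2)) ^ (2 * n + 2)

lemma Dn_zero (y : ℝ) : Dn y 0 = 1 + y := by
  simp [Dn]

lemma Dn_succ (y : ℝ) (n : ℕ) : Dn y (n + 1) = Dn y n * DnStep y n := by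
  have hodd : ((2 * n + 1 + 1 : ℕ) : ℤ) * (-1) ^ (2 * n + 1 + 1 + 1) = -((2 * n + 2 : ℕ) : ℤ) := by
    rw [Odd.neg_one_pow ⟨n + 1, by ring⟩]; push_cast; ring
  have heven : ((2 * n + 2 + 1 : ℕ) : ℤ) * (-1) ^ (2 * n + 2 + 1 + 1) = (2 * n + 3 : ℕ) := by
    rw [Even.neg_one_pow ⟨n + 2, by ring⟩]; push_cast; ring
  rw [Dn, Dn, show 2 * (n + 1) + 1 = 2 * n + 1 + 1 + 1 by ring, prod_Icc_succ_top (by omega),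
    prod_Icc_succ_top (by omega), hodd, heven, zpow_neg, zpow_natCast, zpow_natCast, DnStep]
  push_cast
  ring

lemma one_le_DnStep {y : ℝ} (hy : -1 < y) (n : ℕ) : 1 ≤ DnStep y n := by
  have hmono := one_add_div_pow_le_one_add_div_succ_pow (k := 2 * n + 2) (by omega) (y := y)
    (by push_cast; linarith)
  push_cast at hmono
  rw [show (2 : ℝ) * n + 2 + 1 = 2 * n + 3 by ring] at hmono
  rw [DnStep, one_le_div (pow_pos (one_add_div_pos (by positivity) (by linarith)) _)]
  exact hmono

lemma one_add_le_Dn {y : ℝ} (hy : -1 < y) (n : ℕ) : 1 + y ≤ Dn y n := by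
  induction n with
  | zero => rw [Dn_zero]
  | succ n ih =>
    rw [Dn_succ]
    nlinarith [one_le_DnStep hy n]

lemma DnStep_mul_S2Factor {x : ℝ} (hx : |x| < 1) (n : ℕ) :
    DnStep x n * (S2Factor x (2 * n + 1) * S2Factor x (2 * n + 2))
      = DnStep (-x) n * S2Factor (x / 2) n ^ 4 := by
  have hn := n.cast_nonneg (α := ℝ)
  have hp := (one_add_div_pos (by positivity) (by linarith [(abs_lt.1 hx).1]) :
    0 < 1 + x / (2 * n + 2)).ne'
  have hq := (one_add_div_pos (by positivity) (by linarith [(abs_lt.1 hx).2]) :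
    0 < 1 + -x / (2 * n + 2)).ne'
  have hr := (one_add_div_pos (by positivity) (by linarith [(abs_lt.1 hx).1]) :
    0 < 1 + x / (2 * n + 3)).ne'
  have hs := (one_add_div_pos (by positivity) (by linarith [(abs_lt.1 hx).2]) :
    0 < 1 + -x / (2 * n + 3)).ne'
  rw [DnStep, DnStep, S2Factor, S2Factor, S2Factor]
  push_cast
  rw [show (2 : ℝ) * n + 1 + 1 = 2 * n + 2 by ring, show (2 : ℝ) * n + 2 + 1 = 2 * n + 3 by ring,
    show x / 2 / (n + 1) = x / (2 * n + 2) by field_simp, mul_div_cancel₀ x two_ne_zero,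
    show 2 * x = (2 : ℕ) * x by norm_num, exp_nat_mul]
  simp only [sub_eq_add_neg, ← neg_div]
  generalize 1 + x / (2 * n + 2) = p at *
  generalize 1 + -x / (2 * n + 2) = q at *
  generalize 1 + x / (2 * n + 3) = r at *
  generalize 1 + -x / (2 * n + 3) = s at *
  simp only [div_pow, mul_pow, ← pow_mul]
  field_simp
  ring

lemma Dn_mul_prod_S2Factor {x : ℝ} (hx : |x| < 1) (n : ℕ) :
    Dn x n * ∏ m ∈ range (2 * n + 1), S2Factor x m
      = Dn (-x) n * exp (2 * x) * (∏ m ∈ range n, S2Factor (x / 2) m) ^ 4 := by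
  induction n with
  | zero =>
    have hx' : 1 + x ≠ 0 := by linarith [(abs_lt.1 hx).1]
    simp only [Dn_zero, S2Factor, mul_zero, zero_add, prod_range_one, prod_range_zero,
      Nat.cast_zero, pow_one, one_pow, mul_one, div_one]
    field_simp
    ring
  | succ n ih =>
    have hsplit : ∏ m ∈ range (2 * (n + 1) + 1), S2Factor x m
        = (∏ m ∈ range (2 * n + 1), S2Factor x m)
          * (S2Factor x (2 * n + 1) * S2Factor x (2 * n + 2)) := by
      rw [show 2 * (n + 1) + 1 = 2 * n + 1 + 1 + 1 by ring, prod_range_succ, prod_range_succ,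
        mul_assoc]
    rw [Dn_succ, Dn_succ, hsplit, prod_range_succ _ n]
    linear_combination (DnStep x n * (S2Factor x (2 * n + 1) * S2Factor x (2 * n + 2))) * ih
      + Dn (-x) n * exp (2 * x) * (∏ m ∈ range n, S2Factor (x / 2) m) ^ 4
        * DnStep_mul_S2Factor hx n

theorem borwein_dykshoorn_ratio_general (x : ℝ) (hx1 : |x| < 1)
    (Dx Dnegx : ℝ)
    (hD : Tendsto (Dn x) atTop (𝓝 Dx))
    (hDneg : Tendsto (Dn (-x)) atTop (𝓝 Dnegx)) :
    Dx / Dnegx = Real.exp x * (S2 (x / 2)) ^ 4 / S2 x := by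
  have hx2 : |x / 2| < 1 := by rw [abs_div, abs_two]; linarith [abs_nonneg x]
  set P := ∏' n, S2Factor x n
  set Q := ∏' n, S2Factor (x / 2) n
  have hodd : Tendsto (fun n ↦ 2 * n + 1) atTop atTop :=
    tendsto_atTop_mono (fun n ↦ show n ≤ 2 * n + 1 by omega) tendsto_id
  have hlim : Dx * P = Dnegx * exp (2 * x) * Q ^ 4 :=
    tendsto_nhds_unique (hD.mul ((hasProd_S2Factor hx1).tendsto_prod_nat.comp hodd))
      (((hDneg.mul_const _).mul ((hasProd_S2Factor hx2).tendsto_prod_nat.pow 4)).congr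
        fun n ↦ (Dn_mul_prod_S2Factor hx1 n).symm)
  have hDneg_pos : 0 < Dnegx :=
    (by linarith [(abs_lt.1 hx1).2] : (0 : ℝ) < 1 + -x).trans_le
      (ge_of_tendsto' hDneg (one_add_le_Dn (by linarith [(abs_lt.1 hx1).2])))
  have hP := tprod_S2Factor_pos hx1
  have hexp : exp (x / 2) ^ 4 = exp (2 * x) := by rw [← exp_nat_mul]; ring_nf
  rw [S2_eq_exp_mul_tprod, S2_eq_exp_mul_tprod, mul_pow, hexp, div_eq_div_iff hDneg_pos.ne'
    (by positivity)]
  linear_combination exp x * hlim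

theorem borwein_dykshoorn_ratio (x : ℝ) (hx0 : 0 < |x|) (hx1 : |x| < 1)
    (Dx Dnegx : ℝ)
    (hD : Tendsto (Dn x) atTop (𝓝 Dx))
    (hDneg : Tendsto (Dn (-x)) atTop (𝓝 Dnegx)) :
    Dx / Dnegx = Real.exp x * (S2 (x / 2)) ^ 4 / S2 x :=
  borwein_dykshoorn_ratio_general x hx1 Dx Dnegx hD hDneg
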